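/- Let Ω_n count tuples (ν_1,…,ν_N) of nonnegative integers with ν_i ≤ 2j_i and ∑ ν_i = n, and set 2J_0 = ∑ 2j_i. Then the sequence Ω_0, Ω_1, …, Ω_{2J_0} is unimodal: Ω_n ≤ Ω_{n'} whenever n < n' ≤ ⌊J_0⌋; in particular the maximum is attained at n = ⌊J_0⌋. -/

import Mathlib

/-!
Splitting off the last coordinate gives `Ω_{N+1}(n) = ∑_{n - e ≤ j ≤ n} Ω_N(j)` with `e = d_last`,
i.e. the sequence is convolved with a window of width `e + 1`. Such a window sum of a sequence
that is symmetric and unimodal on `[0, D]` is symmetric and unimodal on `[0, D + e]`: sliding the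
window one step to the right below the middle drops `f (n - e)` and gains `f (n + 1)`, and the
latter is the larger value because it is closer to the centre `D / 2`. Induction on `N` then
starts from the point mass at `0`.
-/

open Finset

def tupleCount {N : ℕ} (d : Fin N → ℕ) (n : ℕ) : ℕ :=
  #{ν : (i : Fin N) → Fin (d i + 1) | ∑ i, (ν i : ℕ) = n}

def windowSum (e : ℕ) (f : ℕ → ℕ) (n : ℕ) : ℕ :=
  ∑ j ∈ Icc (n - e) n, f j

theorem windowSum_succ_add {e n : ℕ} (f : ℕ → ℕ) (he : e ≤ n) :
    windowSum e f (n + 1) + f (n - e) = windowSum e f n + f (n + 1) := by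
  rw [windowSum, windowSum, show n + 1 - e = n - e + 1 by omega, sum_Icc_succ_top (by omega),
    Icc_eq_cons_Ioc (Nat.sub_le n e), sum_cons, ← Icc_add_one_left_eq_Ioc]
  ring

theorem windowSum_eq_sum_range_ite (e : ℕ) (f : ℕ → ℕ) (n : ℕ) :
    windowSum e f n = ∑ k ∈ range (e + 1), if k ≤ n then f (n - k) else 0 := by
  rw [← sum_filter, windowSum]
  refine sum_nbij' (n - ·) (n - ·) ?_ ?_ ?_ ?_ ?_ <;> intro j hj <;>
    simp only [mem_Icc, mem_filter, mem_range] at hj ⊢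
  all_goals try omega
  rw [Nat.sub_sub_self hj.2]

structure IsSymmUnimodal (D : ℕ) (f : ℕ → ℕ) : Prop where
  le_succ : ∀ n, 2 * (n + 1) ≤ D → f n ≤ f (n + 1)
  symm : ∀ k ≤ D, f k = f (D - k)
  eq_zero : ∀ k, D < k → f k = 0

namespace IsSymmUnimodal

variable {D : ℕ} {f : ℕ → ℕ}

theorem le_of_le_of_two_mul_le (h : IsSymmUnimodal D f) {m n : ℕ} (hmn : m ≤ n)
    (hn : 2 * n ≤ D) : f m ≤ f n := by
  induction n, hmn using Nat.le_induction with
  | base => exact le_rfl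
  | succ n _ ih => exact (ih (by omega)).trans (h.le_succ n hn)

theorem le_of_le_of_add_le (h : IsSymmUnimodal D f) {m n : ℕ} (hmn : m ≤ n)
    (hD : n + m ≤ D) : f m ≤ f n := by
  by_cases hn : 2 * n ≤ D
  · exact h.le_of_le_of_two_mul_le hmn hn
  · rw [h.symm n (by omega)]
    exact h.le_of_le_of_two_mul_le (by omega) (by omega)

theorem le_half (h : IsSymmUnimodal D f) {n : ℕ} (hn : n ≤ D) : f n ≤ f (D / 2) := by
  by_cases hn' : n ≤ D / 2
  · exact h.le_of_le_of_add_le hn' (by omega)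
  · rw [h.symm n hn]
    exact h.le_of_le_of_add_le (by omega) (by omega)

/-- The window is written as `j ≤ n ≤ j + e`, free of truncated subtraction, so that it can be
reflected in `j ↦ D - j`. -/
theorem windowSum_eq_sum_range (h : IsSymmUnimodal D f) (e n : ℕ) :
    windowSum e f n = ∑ j ∈ range (D + 1), if j ≤ n ∧ n ≤ j + e then f j else 0 := by
  rw [← sum_filter, windowSum]
  refine (sum_subset (fun j => by simp only [mem_filter, mem_range, mem_Icc]; omega)
    fun j hj hj' => h.eq_zero j ?_).symm
  simp only [mem_filter, mem_range, mem_Icc] at hj hj'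
  omega

theorem windowSum (h : IsSymmUnimodal D f) (e : ℕ) :
    IsSymmUnimodal (D + e) (windowSum e f) where
  le_succ n hn := by
    by_cases he : e ≤ n
    · have hslide := windowSum_succ_add f he
      have hdrop : f (n - e) ≤ f (n + 1) := h.le_of_le_of_add_le (by omega) (by omega)
      omega
    · exact sum_le_sum_of_subset (Icc_subset_Icc (by omega) (by omega))
  symm k hk := by
    rw [h.windowSum_eq_sum_range, h.windowSum_eq_sum_range, ← sum_range_reflect]
    refine sum_congr rfl fun j hj => ?_
    rw [mem_range] at hj
    rw [h.symm j (by omega), Nat.add_sub_cancel]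
    exact if_congr (by omega) rfl rfl
  eq_zero k hk := sum_eq_zero fun j hj => h.eq_zero j (by rw [mem_Icc] at hj; omega)

end IsSymmUnimodal

theorem tupleCount_fin_zero_eq_zero (d : Fin 0 → ℕ) {n : ℕ} (hn : n ≠ 0) :
    tupleCount d n = 0 := by
  simp [tupleCount, hn.symm]

theorem card_add_sum_eq_tupleCount {N : ℕ} (d : Fin N → ℕ) (k n : ℕ) :
    Fintype.card {ν : (i : Fin N) → Fin (d i + 1) // k + ∑ i, (ν i : ℕ) = n} =
      if k ≤ n then tupleCount d (n - k) else 0 := by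
  split_ifs with hk
  · rw [tupleCount, ← Fintype.card_subtype]
    exact Fintype.card_congr (Equiv.subtypeEquivRight fun ν => by omega)
  · exact Fintype.card_eq_zero_iff.mpr ⟨fun ν => hk (by omega)⟩

theorem tupleCount_succ_eq_sum {N : ℕ} (d : Fin (N + 1) → ℕ) (n : ℕ) :
    tupleCount d n = ∑ k : Fin (d (Fin.last N) + 1),
      Fintype.card {ν : (i : Fin N) → Fin (d i.castSucc + 1) // k + ∑ i, (ν i : ℕ) = n} := by
  rw [tupleCount, ← Fintype.card_subtype, ← Fintype.card_sigma]
  refine Fintype.card_congr <| ((Equiv.subtypeEquiv (Fin.snocEquiv _) fun ν => ?_).symm).trans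
    (Equiv.subtypeProdEquivSigmaSubtype fun (k : Fin (d (Fin.last N) + 1))
      (ν : (i : Fin N) → Fin (d i.castSucc + 1)) => (k : ℕ) + ∑ i, (ν i : ℕ) = n)
  simp only [Fin.snocEquiv, Equiv.coe_fn_mk, Fin.sum_univ_castSucc, Fin.snoc_castSucc,
    Fin.snoc_last, add_comm]

theorem tupleCount_succ {N : ℕ} (d : Fin (N + 1) → ℕ) (n : ℕ) :
    tupleCount d n = windowSum (d (Fin.last N)) (tupleCount fun i => d i.castSucc) n := by
  simp only [tupleCount_succ_eq_sum, card_add_sum_eq_tupleCount, windowSum_eq_sum_range_ite]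
  exact Fin.sum_univ_eq_sum_range (fun k => if k ≤ n then tupleCount _ (n - k) else 0) _

theorem isSymmUnimodal_tupleCount {N : ℕ} (d : Fin N → ℕ) :
    IsSymmUnimodal (∑ i, d i) (tupleCount d) := by
  induction N with
  | zero =>
    rw [Fin.sum_univ_zero]
    exact ⟨fun n hn => by omega, fun k hk => by obtain rfl := Nat.le_zero.mp hk; rfl,
      fun k hk => tupleCount_fin_zero_eq_zero d (by omega)⟩
  | succ N ih =>
    rw [Fin.sum_univ_castSucc, funext (tupleCount_succ d)]
    exact (ih _).windowSum _

/-- unimodality of the block dimensions `Ω_n` (the number of tuples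
`(ν i)` with `0 ≤ ν i ≤ d i`, `d i = 2 j_i`, and `∑ ν i = n`): `Ω_n ≤ Ω_{n'}`
whenever `n < n' ≤ ⌊J₀⌋ = (∑ d i)/2`; in particular the maximum of the sequence
`Ω_0, …, Ω_{2J₀}` is attained at `n = ⌊J₀⌋`. -/
theorem block_dimension_unimodal (N : ℕ) (d : Fin N → ℕ)
    (Ω : ℕ → ℕ)
    (hΩ : ∀ n, Ω n =
      (Finset.univ.filter
        (fun ν : (i : Fin N) → Fin (d i + 1) => ∑ i, ((ν i : ℕ)) = n)).card) :
    (∀ n n' : ℕ, n < n' → n' ≤ (∑ i, d i) / 2 → Ω n ≤ Ω n') ∧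
    (∀ n : ℕ, n ≤ ∑ i, d i → Ω n ≤ Ω ((∑ i, d i) / 2)) := by
  obtain rfl : Ω = tupleCount d := funext hΩ
  have h := isSymmUnimodal_tupleCount d
  exact ⟨fun n n' hlt hn' => h.le_of_le_of_add_le hlt.le (by omega), fun n hn => h.le_half hn⟩
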